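/- In the directed model with k = ∞, if G has no removable edge and has at least one addable edge, then G has a strongly connected component containing at least c vertices. -/

import Mathlib

open Relation

variable {V : Type*} [Fintype V] [DecidableEq V]

/-- Add a directed edge `u → v`. -/
def addE (G : V → V → Prop) (u v : V) : V → V → Prop :=
  fun a b => G a b ∨ (a = u ∧ b = v)

/-- Delete the directed edge `u → v`. -/
def delE (G : V → V → Prop) (u v : V) : V → V → Prop :=
  fun a b => G a b ∧ ¬(a = u ∧ b = v)

/-- Vertices other than `v` reachable from `v` (k = ∞). -/
def reachSet (G : V → V → Prop) (v : V) : Set V :=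
  {w | w ≠ v ∧ ReflTransGen G v w}

/-- Out-degree of `v`. -/
noncomputable def outdeg (G : V → V → Prop) (v : V) : ℕ :=
  {w | G v w}.ncard

/-- Utility of agent `v`: reachable vertices minus `c` per out-edge. -/
noncomputable def util (G : V → V → Prop) (c : ℝ) (v : V) : ℝ :=
  ((reachSet G v).ncard : ℝ) - c * (outdeg G v : ℝ)

/-- `u → v` is addable: it is absent and adding it strictly increases `u`'s utility. -/
def Addable (G : V → V → Prop) (c : ℝ) (u v : V) : Prop :=
  ¬ G u v ∧ util G c u < util (addE G u v) c u

/-- `u → v` is removable: it is present and deleting it strictly increases `u`'s utility. -/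
def Removable (G : V → V → Prop) (c : ℝ) (u v : V) : Prop :=
  G u v ∧ util G c u < util (delE G u v) c u

/-- `u` and `v` lie in the same strongly connected component. -/
def SameSCC (G : V → V → Prop) (u v : V) : Prop :=
  ReflTransGen G u v ∧ ReflTransGen G v u

/-- The strongly connected component of `v`. -/
def scc (G : V → V → Prop) (v : V) : Set V := {w | SameSCC G v w}

/-!
Write `D(b)` for the set of vertices reachable from `b`, `b` included. Deleting an edge `a → b`
saves `a` the cost `c` and loses `a` only vertices of `D(b)`, so if `a → b` is not removable then
`|D(b)| ≥ c`; likewise an addable edge `u → v` gains `u` more than `c` vertices, all of them in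
`D(v)`. Now descend: if the strongly connected component of `w` is not all of `D(w)`, a path from
`w` out of the component has an edge `a → b` with `b ∈ D(w)` not reaching back to `w`, so
`D(b) ⊊ D(w)` while still `|D(b)| ≥ c`. The descent stops at a component of size `|D(w)| ≥ c`.
-/

def descendants {α : Type*} (r : α → α → Prop) (a : α) : Set α := {b | ReflTransGen r a b}

section Descendants

variable {α : Type*} {r : α → α → Prop} {a b : α}

lemma descendants_ssubset (hb : b ∈ descendants r a) (hba : a ∉ descendants r b) :
    descendants r b ⊂ descendants r a :=
  lt_of_le_not_ge (fun _ hx => ReflTransGen.trans hb hx) fun h => hba (h ReflTransGen.refl)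

lemma exists_edge_to_descendant_not_reaching {x : α} (hx : x ∈ descendants r a)
    (hxa : a ∉ descendants r x) :
    ∃ y z, r y z ∧ z ∈ descendants r a ∧ a ∉ descendants r z := by
  induction hx with
  | refl => exact absurd ReflTransGen.refl hxa
  | @tail y z hay hyz ih =>
    by_cases hya : a ∈ descendants r y
    · exact ⟨y, z, hyz, hay.tail hyz, hxa⟩
    · exact ih hya

end Descendants

section EdgeChange

variable {α : Type*} (G : α → α → Prop)

lemma reflTransGen_delE_or {a b z : α} (h : ReflTransGen G a z) :
    ReflTransGen (delE G a b) a z ∨ ReflTransGen G b z := by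
  induction h with
  | refl => exact Or.inl ReflTransGen.refl
  | @tail y z _ hyz ih =>
    rcases ih with ih | ih
    · by_cases hdel : y = a ∧ z = b
      · exact Or.inr (hdel.2 ▸ ReflTransGen.refl)
      · exact Or.inl (ih.tail ⟨hyz, hdel⟩)
    · exact Or.inr (ih.tail hyz)

lemma reflTransGen_addE_or {u v x z : α} (h : ReflTransGen (addE G u v) x z) :
    ReflTransGen G x z ∨ ReflTransGen G v z := by
  induction h with
  | refl => exact Or.inl ReflTransGen.refl
  | @tail y z _ hyz ih =>
    rcases hyz with hyz | ⟨-, rfl⟩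
    · exact ih.imp (·.tail hyz) (·.tail hyz)
    · exact Or.inr ReflTransGen.refl

lemma reachSet_delE_subset (a b : α) : reachSet (delE G a b) a ⊆ reachSet G a :=
  fun _ hz => ⟨hz.1, ReflTransGen.mono (fun _ _ h => h.1) _ _ hz.2⟩

lemma reachSet_subset_addE (u v : α) : reachSet G u ⊆ reachSet (addE G u v) u :=
  fun _ hz => ⟨hz.1, ReflTransGen.mono (fun _ _ h => Or.inl h) _ _ hz.2⟩

lemma reachSet_diff_reachSet_delE_subset (a b : α) :
    reachSet G a \ reachSet (delE G a b) a ⊆ descendants G b := by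
  rintro z ⟨⟨hza, haz⟩, hdel⟩
  exact (reflTransGen_delE_or G haz).resolve_left fun h => hdel ⟨hza, h⟩

lemma reachSet_addE_diff_subset (u v : α) :
    reachSet (addE G u v) u \ reachSet G u ⊆ descendants G v := by
  rintro z ⟨⟨hzu, huz⟩, hold⟩
  exact (reflTransGen_addE_or G huz).resolve_left fun h => hold ⟨hzu, h⟩

end EdgeChange

section Finite

variable {α : Type*} [Finite α] {G : α → α → Prop}

lemma outdeg_delE_add_one {a b : α} (hab : G a b) : outdeg (delE G a b) a + 1 = outdeg G a := by
  have hout : {w | delE G a b a w} = {w | G a w} \ {b} := by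
    ext w
    simp only [delE, Set.mem_ofPred_eq, Set.mem_sdiff, Set.mem_singleton_iff]
    tauto
  rw [outdeg, outdeg, hout]
  exact Set.ncard_sdiff_singleton_add_one hab

lemma outdeg_addE {u v : α} (huv : ¬ G u v) : outdeg (addE G u v) u = outdeg G u + 1 := by
  have hout : {w | addE G u v u w} = insert v {w | G u w} := by
    ext w
    simp only [addE, Set.mem_ofPred_eq, Set.mem_insert_iff]
    tauto
  rw [outdeg, outdeg, hout]
  exact Set.ncard_insert_of_notMem huv

lemma le_ncard_descendants_of_not_removable {c : ℝ} {a b : α} (hab : G a b)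
    (hrem : ¬ Removable G c a b) : c ≤ (descendants G b).ncard := by
  have hutil : util (delE G a b) c a ≤ util G c a := not_lt.1 fun h => hrem ⟨hab, h⟩
  have hsplit : ((reachSet G a \ reachSet (delE G a b) a).ncard : ℝ)
      + (reachSet (delE G a b) a).ncard = (reachSet G a).ncard := by
    exact_mod_cast Set.ncard_sdiff_add_ncard_of_subset (reachSet_delE_subset G a b)
  have hlost : ((reachSet G a \ reachSet (delE G a b) a).ncard : ℝ) ≤ (descendants G b).ncard := by
    exact_mod_cast Set.ncard_le_ncard (reachSet_diff_reachSet_delE_subset G a b)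
  rw [util, util, ← outdeg_delE_add_one hab] at hutil
  push_cast at hutil
  linarith

lemma lt_ncard_descendants_of_addable {c : ℝ} {u v : α} (huv : Addable G c u v) :
    c < (descendants G v).ncard := by
  obtain ⟨hnot, hutil⟩ := huv
  have hsplit : ((reachSet (addE G u v) u \ reachSet G u).ncard : ℝ)
      + (reachSet G u).ncard = (reachSet (addE G u v) u).ncard := by
    exact_mod_cast Set.ncard_sdiff_add_ncard_of_subset (reachSet_subset_addE G u v)
  have hgain : ((reachSet (addE G u v) u \ reachSet G u).ncard : ℝ) ≤ (descendants G v).ncard := by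
    exact_mod_cast Set.ncard_le_ncard (reachSet_addE_diff_subset G u v)
  rw [util, util, outdeg_addE hnot] at hutil
  push_cast at hutil
  linarith

lemma exists_le_ncard_scc {c : ℝ} (hedge : ∀ a b, G a b → c ≤ (descendants G b).ncard) {v : α}
    (hv : c ≤ (descendants G v).ncard) : ∃ w, c ≤ (scc G w).ncard := by
  induction hn : (descendants G v).ncard using Nat.strong_induction_on generalizing v with
  | _ n ih =>
  by_cases hscc : descendants G v ⊆ scc G v
  · exact ⟨v, hv.trans (by exact_mod_cast Set.ncard_le_ncard hscc)⟩
  · obtain ⟨x, hvx, hxv⟩ := Set.not_subset.1 hscc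
    obtain ⟨a, b, hab, hvb, hbv⟩ :=
      exists_edge_to_descendant_not_reaching hvx fun h => hxv ⟨hvx, h⟩
    exact ih _ (hn ▸ Set.ncard_lt_ncard (descendants_ssubset hvb hbv)) (hedge a b hab) rfl

end Finite

theorem stmt5_general (G : V → V → Prop) (c : ℝ)
    (hnorem : ∀ u v, ¬ Removable G c u v)
    (hadd : ∃ u v, Addable G c u v) :
    ∃ v : V, c ≤ ((scc G v).ncard : ℝ) := by
  obtain ⟨u, v, huv⟩ := hadd
  exact exists_le_ncard_scc (fun a b hab => le_ncard_descendants_of_not_removable hab (hnorem a b))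
    (lt_ncard_descendants_of_addable huv).le

/-- If `G` has no removable edge and at least one addable edge, then `G` has a strongly
connected component containing at least `c` vertices. -/
theorem stmt5 (G : V → V → Prop) (c : ℝ) (hc : 0 < c)
    (hnorem : ∀ u v, ¬ Removable G c u v)
    (hadd : ∃ u v, Addable G c u v) :
    ∃ v : V, c ≤ ((scc G v).ncard : ℝ) :=
  stmt5_general G c hnorem hadd
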